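/- Let Q be an n×n real symmetric matrix with ‖Q‖₂ ≤ 1, let α ∈ (0,1), let d₁,…,d_n > 0 and w₁,…,w_n > 0 with D = diag(d), W = diag(w), w_max = max_i w_i, w_min = min_i w_i, and let v ∈ ℝⁿ. If δ₁ ≥ max_i |√(d_i/w_i) − 1| and δ₂ ≥ max_i |√(w_i/d_i) − 1|, then ‖ (1−α) ( D^{1/2}(I − αQ)^{-1}D^{-1/2} − W^{1/2}(I − αQ)^{-1}W^{-1/2} ) v ‖₂ ≤ ( (1+δ₁)δ₂ + δ₁ ) · √(w_max/w_min) · ‖v‖₂. -/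

import Mathlib

/-!
Write `D^{1/2} = W^{1/2} S` and `D^{-1/2} = T W^{-1/2}` with `S = diag √(d/w)` and
`T = diag √(w/d)`. With `R = (1 - α)(I - αQ)⁻¹` the difference becomes `W^{1/2} (S R T - R) W^{-1/2}`,
and `S R T - R = (S - 1) R + S R (T - 1)`, so its norm is at most
`(δ₁ + (1 + δ₁) δ₂) ‖R‖`. The Neumann series gives `‖R‖ ≤ (1 - α) / (1 - α ‖Q‖) ≤ 1`, and the
outer diagonal factors contribute `√w_max` and `1 / √w_min`.
-/

open Matrix Finset

/-- Spectral norm of a matrix: the operator norm induced by the Euclidean vector norm. -/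
noncomputable def sNorm {n : ℕ} (M : Matrix (Fin n) (Fin n) ℝ) : ℝ :=
  ‖Matrix.toEuclideanCLM (𝕜 := ℝ) M‖

/-- Euclidean norm of a vector. -/
noncomputable def vNorm2 {n : ℕ} (x : Fin n → ℝ) : ℝ :=
  Real.sqrt (∑ i, (x i) ^ 2)

open scoped Matrix.Norms.L2Operator Ring

theorem norm_ringInverse_one_sub_le {R : Type*} [NormedRing R] [HasSummableGeomSeries R]
    (h1 : ‖(1 : R)‖ ≤ 1) {x : R} (hx : ‖x‖ < 1) : ‖(1 - x)⁻¹ʳ‖ ≤ (1 - ‖x‖)⁻¹ := by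
  rw [← geom_series_eq_inverse x hx]
  linarith [tsum_geometric_le_of_norm_lt_one x hx]

theorem norm_smul_ringInverse_one_sub_smul_le {R : Type*} [NormedRing R] [NormedAlgebra ℝ R]
    [HasSummableGeomSeries R] (h1 : ‖(1 : R)‖ ≤ 1) {q : R} (hq : ‖q‖ ≤ 1) {α : ℝ}
    (hα : α ∈ Set.Ioo (0 : ℝ) 1) : ‖(1 - α) • (1 - α • q)⁻¹ʳ‖ ≤ 1 := by
  obtain ⟨hα0, hα1⟩ := hα
  have hαq : ‖α • q‖ ≤ α := by
    simpa [norm_smul, abs_of_pos hα0] using mul_le_mul_of_nonneg_left hq hα0.le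
  rw [norm_smul, Real.norm_of_nonneg (by linarith)]
  calc (1 - α) * ‖(1 - α • q)⁻¹ʳ‖ ≤ (1 - α) * (1 - α)⁻¹ := by
        refine mul_le_mul_of_nonneg_left ?_ (by linarith)
        exact (norm_ringInverse_one_sub_le h1 (by linarith)).trans (by gcongr)
    _ = 1 := mul_inv_cancel₀ (by linarith)

theorem norm_mul_mul_sub_le {R : Type*} [SeminormedRing R] (s r t : R) :
    ‖s * r * t - r‖ ≤ (‖s - 1‖ + ‖s‖ * ‖t - 1‖) * ‖r‖ := by
  calc ‖s * r * t - r‖ = ‖(s - 1) * r + s * r * (t - 1)‖ := by noncomm_ring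
    _ ≤ ‖s - 1‖ * ‖r‖ + ‖s‖ * ‖r‖ * ‖t - 1‖ :=
        (norm_add_le _ _).trans (add_le_add (norm_mul_le _ _) norm_mul₃_le)
    _ = (‖s - 1‖ + ‖s‖ * ‖t - 1‖) * ‖r‖ := by ring

theorem norm_mul_mul_mul_sub_mul_le {R : Type*} [SeminormedRing R] (h1 : ‖(1 : R)‖ ≤ 1)
    {u s r t u' : R} {a b δ₁ δ₂ : ℝ} (hu : ‖u‖ ≤ a) (hu' : ‖u'‖ ≤ b⁻¹) (hs : ‖s - 1‖ ≤ δ₁)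
    (ht : ‖t - 1‖ ≤ δ₂) (hr : ‖r‖ ≤ 1) :
    ‖u * (s * r * t - r) * u'‖ ≤ ((1 + δ₁) * δ₂ + δ₁) * (a / b) := by
  have hδ₁ : 0 ≤ δ₁ := (norm_nonneg _).trans hs
  have hδ₂ : 0 ≤ δ₂ := (norm_nonneg _).trans ht
  have ha : 0 ≤ a := (norm_nonneg _).trans hu
  have hsn : ‖s‖ ≤ 1 + δ₁ := by linarith [norm_le_norm_sub_add s 1]
  calc ‖u * (s * r * t - r) * u'‖ ≤ ‖u‖ * ((‖s - 1‖ + ‖s‖ * ‖t - 1‖) * ‖r‖) * ‖u'‖ := by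
        refine norm_mul₃_le.trans ?_
        gcongr
        exact norm_mul_mul_sub_le s r t
    _ ≤ a * ((δ₁ + (1 + δ₁) * δ₂) * 1) * b⁻¹ := by gcongr
    _ = ((1 + δ₁) * δ₂ + δ₁) * (a / b) := by ring

namespace Matrix

variable {n : Type*} [Fintype n] [DecidableEq n]

theorem l2_opNorm_one_le {𝕜 : Type*} [RCLike 𝕜] : ‖(1 : Matrix n n 𝕜)‖ ≤ 1 := by
  rw [← diagonal_one, l2_opNorm_diagonal]
  exact (pi_norm_le_iff_of_nonneg zero_le_one).2 fun _ => norm_one.le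

theorem l2_opNorm_diagonal_le [Nonempty n] {𝕜 : Type*} [RCLike 𝕜] {f : n → 𝕜} {c : ℝ}
    (h : ∀ i, ‖f i‖ ≤ c) : ‖diagonal f‖ ≤ c := by
  rw [l2_opNorm_diagonal]
  exact (pi_norm_le_iff_of_nonempty _).2 h

theorem l2_opNorm_diagonal_sub_one_le [Nonempty n] {f : n → ℝ} {c : ℝ}
    (h : ∀ i, |f i - 1| ≤ c) : ‖diagonal f - 1‖ ≤ c := by
  rw [← diagonal_one, diagonal_sub]
  exact l2_opNorm_diagonal_le h

theorem l2_opNorm_diagonal_sqrt_le [Nonempty n] (w : n → ℝ) :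
    ‖diagonal fun i => √(w i)‖ ≤ √(univ.sup' univ_nonempty w) :=
  l2_opNorm_diagonal_le fun i => by
    rw [Real.norm_of_nonneg (Real.sqrt_nonneg _)]
    exact Real.sqrt_le_sqrt (le_sup' w (mem_univ i))

theorem l2_opNorm_diagonal_inv_sqrt_le [Nonempty n] {w : n → ℝ} (hw : ∀ i, 0 < w i) :
    ‖diagonal fun i => (√(w i))⁻¹‖ ≤ (√(univ.inf' univ_nonempty w))⁻¹ :=
  l2_opNorm_diagonal_le fun i => by
    rw [Real.norm_of_nonneg (by positivity)]
    exact inv_anti₀ (Real.sqrt_pos.2 ((lt_inf'_iff _).2 fun j _ => hw j))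
      (Real.sqrt_le_sqrt (inf'_le w (mem_univ i)))

theorem diagonal_sqrt_eq_mul (d : n → ℝ) {w : n → ℝ} (hw : ∀ i, 0 < w i) :
    diagonal (fun i => √(d i)) =
      diagonal (fun i => √(w i)) * diagonal (fun i => √(d i / w i)) := by
  rw [diagonal_mul_diagonal]
  congr 1 with i
  rw [← Real.sqrt_mul (hw i).le, mul_div_cancel₀ _ (hw i).ne']

theorem diagonal_inv_sqrt_eq_mul (d : n → ℝ) {w : n → ℝ} (hw : ∀ i, 0 < w i) :
    diagonal (fun i => (√(d i))⁻¹) =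
      diagonal (fun i => √(w i / d i)) * diagonal (fun i => (√(w i))⁻¹) := by
  rw [diagonal_mul_diagonal]
  congr 1 with i
  have := (Real.sqrt_pos.2 (hw i)).ne'
  rw [Real.sqrt_div (hw i).le]
  field_simp

end Matrix

theorem vNorm2_nonneg {n : ℕ} (x : Fin n → ℝ) : 0 ≤ vNorm2 x := Real.sqrt_nonneg _

theorem vNorm2_mulVec_le {n : ℕ} (M : Matrix (Fin n) (Fin n) ℝ) (x : Fin n → ℝ) :
    vNorm2 (M *ᵥ x) ≤ ‖M‖ * vNorm2 x := by
  simpa [vNorm2, EuclideanSpace.norm_eq] using M.l2_opNorm_mulVec (WithLp.toLp 2 x)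

theorem diagonal_conjugation_resolvent_bound_general
    (n : ℕ) [NeZero n]
    (Q : Matrix (Fin n) (Fin n) ℝ) (hQ1 : sNorm Q ≤ 1)
    (α : ℝ) (hα : α ∈ Set.Ioo (0 : ℝ) 1)
    (d w : Fin n → ℝ) (hw : ∀ i, 0 < w i)
    (v : Fin n → ℝ)
    (δ₁ δ₂ : ℝ)
    (hδ₁ : ∀ i, |Real.sqrt (d i / w i) - 1| ≤ δ₁)
    (hδ₂ : ∀ i, |Real.sqrt (w i / d i) - 1| ≤ δ₂) :
    vNorm2 ((1 - α) • ((Matrix.diagonal (fun i => Real.sqrt (d i)) * (1 - α • Q)⁻¹ *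
          Matrix.diagonal (fun i => (Real.sqrt (d i))⁻¹) -
        Matrix.diagonal (fun i => Real.sqrt (w i)) * (1 - α • Q)⁻¹ *
          Matrix.diagonal (fun i => (Real.sqrt (w i))⁻¹)) *ᵥ v)) ≤
      ((1 + δ₁) * δ₂ + δ₁) *
        Real.sqrt (univ.sup' univ_nonempty w / univ.inf' univ_nonempty w) *
        vNorm2 v := by
  set W := diagonal fun i => √(w i)
  set W' := diagonal fun i => (√(w i))⁻¹
  set S := diagonal fun i => √(d i / w i)
  set T := diagonal fun i => √(w i / d i)
  set R : Matrix (Fin n) (Fin n) ℝ := (1 - α) • (1 - α • Q)⁻¹ with hR_def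
  have hR : ‖R‖ ≤ 1 := by
    rw [hR_def, nonsing_inv_eq_ringInverse]
    -- `sNorm Q` is definitionally the L2 operator norm `‖Q‖`
    exact norm_smul_ringInverse_one_sub_smul_le l2_opNorm_one_le (q := Q) hQ1 hα
  have hconj : (1 - α) • (W * S * (1 - α • Q)⁻¹ * (T * W') - W * (1 - α • Q)⁻¹ * W') =
      W * (S * R * T - R) * W' := by
    simp only [hR_def, mul_sub, sub_mul, smul_sub, smul_mul_assoc, mul_smul_comm, mul_assoc]
  rw [diagonal_sqrt_eq_mul d hw, diagonal_inv_sqrt_eq_mul d hw, ← smul_mulVec, hconj,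
    Real.sqrt_div' _ ((lt_inf'_iff _).2 fun i _ => hw i).le]
  refine (vNorm2_mulVec_le _ v).trans (mul_le_mul_of_nonneg_right ?_ (vNorm2_nonneg v))
  exact norm_mul_mul_mul_sub_mul_le l2_opNorm_one_le (l2_opNorm_diagonal_sqrt_le w)
    (l2_opNorm_diagonal_inv_sqrt_le hw) (l2_opNorm_diagonal_sub_one_le hδ₁)
    (l2_opNorm_diagonal_sub_one_le hδ₂) hR

/-- for symmetric `Q` with `‖Q‖₂ ≤ 1`, `α ∈ (0,1)` and positive diagonal
scalings `D, W`, if `δ₁ ≥ max_i |√(d_i/w_i) − 1|` and `δ₂ ≥ max_i |√(w_i/d_i) − 1|`, then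
`‖(1−α)(D^{1/2}(I−αQ)^{-1}D^{-1/2} − W^{1/2}(I−αQ)^{-1}W^{-1/2}) v‖₂
  ≤ ((1+δ₁)δ₂ + δ₁)·√(w_max/w_min)·‖v‖₂`. -/
theorem diagonal_conjugation_resolvent_bound
    (n : ℕ) [NeZero n]
    (Q : Matrix (Fin n) (Fin n) ℝ) (hQsymm : Q.IsSymm) (hQ1 : sNorm Q ≤ 1)
    (α : ℝ) (hα : α ∈ Set.Ioo (0 : ℝ) 1)
    (d w : Fin n → ℝ) (hd : ∀ i, 0 < d i) (hw : ∀ i, 0 < w i)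
    (v : Fin n → ℝ)
    (δ₁ δ₂ : ℝ)
    (hδ₁ : ∀ i, |Real.sqrt (d i / w i) - 1| ≤ δ₁)
    (hδ₂ : ∀ i, |Real.sqrt (w i / d i) - 1| ≤ δ₂) :
    vNorm2 ((1 - α) • ((Matrix.diagonal (fun i => Real.sqrt (d i)) * (1 - α • Q)⁻¹ *
          Matrix.diagonal (fun i => (Real.sqrt (d i))⁻¹) -
        Matrix.diagonal (fun i => Real.sqrt (w i)) * (1 - α • Q)⁻¹ *
          Matrix.diagonal (fun i => (Real.sqrt (w i))⁻¹)) *ᵥ v)) ≤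
      ((1 + δ₁) * δ₂ + δ₁) *
        Real.sqrt (univ.sup' univ_nonempty w / univ.inf' univ_nonempty w) *
        vNorm2 v :=
  diagonal_conjugation_resolvent_bound_general n Q hQ1 α hα d w hw v δ₁ δ₂ hδ₁ hδ₂
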